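/- In the Grigorchuk group G, the parabolic subgroup P_n = Stab_G(1^n) has exactly n+1 orbits on the n-th level Σ^n of the binary tree: the singleton {1^n} and the sets 1^i 0 Σ^{n-1-i} for 0 ≤ i < n. Equivalently, there are exactly n+1 double cosets P_n g P_n in G. -/

import Mathlib

/-- The rooted automorphism `a` of the binary tree: it flips the first letter. -/
def gaFun : List Bool → List Bool
  | [] => []
  | s :: t => (!s) :: t

mutual
  /-- The generator `b` of the Grigorchuk group: `φ(b) = (a, c)`. -/
  def gbFun : List Bool → List Bool
    | [] => []
    | false :: t => false :: gaFun t
    | true :: t => true :: gcFun t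
  /-- The generator `c` of the Grigorchuk group: `φ(c) = (a, d)`. -/
  def gcFun : List Bool → List Bool
    | [] => []
    | false :: t => false :: gaFun t
    | true :: t => true :: gdFun t
  /-- The generator `d` of the Grigorchuk group: `φ(d) = (1, b)`. -/
  def gdFun : List Bool → List Bool
    | [] => []
    | false :: t => false :: t
    | true :: t => true :: gbFun t
end

theorem gaFun_involutive : Function.Involutive gaFun := by
  intro t
  cases t with
  | nil => rfl
  | cons s r => cases s <;> rfl

theorem gbcd_involutive :
    ∀ t : List Bool, gbFun (gbFun t) = t ∧ gcFun (gcFun t) = t ∧ gdFun (gdFun t) = t := by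
  intro t
  induction t with
  | nil => exact ⟨rfl, rfl, rfl⟩
  | cons s r ih =>
    cases s <;>
      simp [gbFun, gcFun, gdFun, gaFun_involutive r, ih.1, ih.2.1, ih.2.2]

/-- The generator `a` as a tree automorphism. -/
def ga : Equiv.Perm (List Bool) := Function.Involutive.toPerm gaFun gaFun_involutive

/-- The generator `b` as a tree automorphism. -/
def gb : Equiv.Perm (List Bool) := Function.Involutive.toPerm gbFun fun t => (gbcd_involutive t).1

/-- The generator `c` as a tree automorphism. -/
def gc : Equiv.Perm (List Bool) := Function.Involutive.toPerm gcFun fun t => (gbcd_involutive t).2.1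

/-- The generator `d` as a tree automorphism. -/
def gd : Equiv.Perm (List Bool) := Function.Involutive.toPerm gdFun fun t => (gbcd_involutive t).2.2

/-- The Grigorchuk group, as the subgroup of `Aut(T₂)` generated by `a, b, c, d`. -/
def grig : Subgroup (Equiv.Perm (List Bool)) := Subgroup.closure {ga, gb, gc, gd}


/-- The stabilizer in the Grigorchuk group of the vertex `1^n`. -/
def grigP (n : ℕ) : Subgroup grig := MulAction.stabilizer grig (List.replicate n true)

/-! Tree automorphisms commute with truncation, so an element fixing `1^n` preserves the number
of leading `1`s of a word of length `n`. Conversely, words with the same number of leading `1`s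
are joined by induction along the spine: below `1` every element of `G` occurs as a section of an
element of `G`, and below `0` one uses `K = ⟨(ab)²⟩^G`. Since `K ≥ K × K` and `(ab)² = (ca, ac)`
flips the second letter, `K` acts transitively on `0Σ^m` and on `1Σ^m`; together with
`b = (a, c)`, corrected on the `1`-subtree by an element of `K`, this makes `P_(m+1)` transitive
on `0Σ^m`. Finally `P_n g P_n ↦ P_n • (g • 1^n)` identifies double cosets with `P_n`-orbits. -/

open Equiv MulAction List

theorem DoubleCoset.card_quotient_stabilizer {G X ι : Type*} [Group G] [MulAction G X] (x : X)
    (c : X → ι)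
    (hc : ∀ g₁ g₂ : G, c (g₁ • x) = c (g₂ • x) ↔ ∃ h ∈ stabilizer G x, h • g₁ • x = g₂ • x) :
    Nat.card (DoubleCoset.Quotient (stabilizer G x : Set G) (stabilizer G x)) =
      Nat.card (Set.range fun g : G => c (g • x)) := by
  have hrel : ∀ a b : G, DoubleCoset.setoid (stabilizer G x : Set G) (stabilizer G x) a b ↔
      Setoid.ker (fun g : G => c (g • x)) a b := by
    intro a b
    rw [DoubleCoset.rel_iff, Setoid.ker_def, hc]
    constructor
    · rintro ⟨h, hh, k, hk, rfl⟩
      exact ⟨h, hh, by rw [mul_smul, mul_smul, mem_stabilizer_iff.mp hk]⟩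
    · rintro ⟨h, hh, hab⟩
      refine ⟨h, hh, a⁻¹ * h⁻¹ * b, ?_, by group⟩
      rw [mem_stabilizer_iff, mul_smul, mul_smul, ← hab, inv_smul_smul, inv_smul_smul]
  exact Nat.card_congr ((Quotient.congrRight hrel).trans (Setoid.quotientKerEquivRange _))

def leadingOnes (l : List Bool) : ℕ := (l.takeWhile fun s => s).length

@[simp] theorem leadingOnes_false_cons (l : List Bool) : leadingOnes (false :: l) = 0 := rfl

@[simp] theorem leadingOnes_true_cons (l : List Bool) :
    leadingOnes (true :: l) = leadingOnes l + 1 := rfl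

theorem leadingOnes_le_length (l : List Bool) : leadingOnes l ≤ l.length :=
  (takeWhile_prefix _).length_le

theorem le_leadingOnes_iff {k : ℕ} {l : List Bool} :
    k ≤ leadingOnes l ↔ l.take k = replicate k true := by
  induction l generalizing k with
  | nil => cases k <;> simp [leadingOnes]
  | cons s t ih => cases k <;> cases s <;> simp [ih, replicate_succ]

@[simp] theorem leadingOnes_replicate (n : ℕ) : leadingOnes (replicate n true) = n := by
  induction n with
  | zero => rfl
  | succ n ih => rw [replicate_succ, leadingOnes_true_cons, ih]

def treeAut (α : Type*) : Subgroup (Perm (List α)) where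
  carrier := {f | ∀ l k, f (l.take k) = (f l).take k}
  mul_mem' {f g} hf hg l k := by rw [Perm.mul_apply, hg l k, hf (g l) k, Perm.mul_apply]
  one_mem' _ _ := rfl
  inv_mem' {f} hf l k := f.injective (by rw [hf]; simp)

section treeAut

variable {α : Type*} {f : Perm (List α)}

theorem apply_take_of_mem_treeAut (hf : f ∈ treeAut α) (l : List α) (k : ℕ) :
    f (l.take k) = (f l).take k :=
  hf l k

theorem length_apply_le_of_mem_treeAut (hf : f ∈ treeAut α) (l : List α) :
    (f l).length ≤ l.length := by
  calc (f l).length = (f (l.take l.length)).length := by rw [take_length]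
    _ = ((f l).take l.length).length := by rw [apply_take_of_mem_treeAut hf]
    _ ≤ l.length := length_take_le _ _

theorem length_apply_of_mem_treeAut (hf : f ∈ treeAut α) (l : List α) :
    (f l).length = l.length :=
  (length_apply_le_of_mem_treeAut hf l).antisymm
    (by simpa using length_apply_le_of_mem_treeAut (inv_mem hf) (f l))

theorem apply_take_eq_of_apply_eq (hf : f ∈ treeAut α) {l : List α} (hl : f l = l) (k : ℕ) :
    f (l.take k) = l.take k := by
  rw [apply_take_of_mem_treeAut hf, hl]

end treeAut

theorem leadingOnes_apply_of_mem_treeAut {f : Perm (List Bool)} (hf : f ∈ treeAut Bool) {n : ℕ}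
    (hfix : f (replicate n true) = replicate n true) {w : List Bool} (hw : w.length = n) :
    leadingOnes (f w) = leadingOnes w := by
  refine eq_of_forall_le_iff fun k => ?_
  rw [le_leadingOnes_iff, le_leadingOnes_iff]
  rcases le_or_gt k n with hk | hk
  · have hfixk : f (replicate k true) = replicate k true := by
      simpa [take_replicate, hk] using apply_take_eq_of_apply_eq hf hfix k
    rw [← apply_take_of_mem_treeAut hf]
    conv_lhs => rw [← hfixk]
    exact f.apply_eq_iff_eq
  · have hlen : ∀ l : List Bool, l.length = n → l.take k ≠ replicate k true := fun l hl h => by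
      have := congrArg length h
      simp only [length_take, length_replicate, hl] at this
      omega
    exact iff_of_false (hlen _ (by rw [length_apply_of_mem_treeAut hf, hw])) (hlen w hw)

-- `treePair (f, g)` is the automorphism written `(f, g)` in the wreath recursion `φ`
def treePair : Perm (List Bool) × Perm (List Bool) →* Perm (List Bool) :=
  MonoidHom.mk'
    (fun p =>
      { toFun := fun
          | [] => []
          | false :: t => false :: p.1 t
          | true :: t => true :: p.2 t
        invFun := fun
          | [] => []
          | false :: t => false :: p.1.symm t
          | true :: t => true :: p.2.symm t
        left_inv := by rintro (_ | ⟨_ | _, t⟩) <;> simp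
        right_inv := by rintro (_ | ⟨_ | _, t⟩) <;> simp })
    (by rintro p q; ext (_ | ⟨_ | _, t⟩) <;> rfl)

@[simp] theorem treePair_apply_false_cons (p : Perm (List Bool) × Perm (List Bool))
    (t : List Bool) : treePair p (false :: t) = false :: p.1 t := rfl

@[simp] theorem treePair_apply_true_cons (p : Perm (List Bool) × Perm (List Bool))
    (t : List Bool) : treePair p (true :: t) = true :: p.2 t := rfl

@[simp] theorem ga_apply_cons (s : Bool) (t : List Bool) : ga (s :: t) = (!s) :: t := rfl

theorem ga_inv : ga⁻¹ = ga := Function.Involutive.toPerm_symm _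
theorem gb_inv : gb⁻¹ = gb := Function.Involutive.toPerm_symm _
theorem gc_inv : gc⁻¹ = gc := Function.Involutive.toPerm_symm _
theorem gd_inv : gd⁻¹ = gd := Function.Involutive.toPerm_symm _

theorem ga_mul_self : ga * ga = 1 := mul_eq_one_iff_eq_inv.mpr ga_inv.symm
theorem gc_mul_self : gc * gc = 1 := mul_eq_one_iff_eq_inv.mpr gc_inv.symm
theorem ga_mul_self_assoc (g : Perm (List Bool)) : ga * (ga * g) = g := by
  rw [← mul_assoc, ga_mul_self, one_mul]

theorem ga_mul_treePair_mul_ga (f g : Perm (List Bool)) :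
    ga * treePair (f, g) * ga = treePair (g, f) := by
  ext (_ | ⟨_ | _, t⟩) : 1 <;> rfl

theorem gb_eq_treePair : gb = treePair (ga, gc) := by ext (_ | ⟨_ | _, t⟩) : 1 <;> rfl

theorem gc_eq_treePair : gc = treePair (ga, gd) := by ext (_ | ⟨_ | _, t⟩) : 1 <;> rfl

theorem gd_eq_treePair : gd = treePair (1, gb) := by ext (_ | ⟨_ | _, t⟩) : 1 <;> rfl

theorem gdFun_gcFun_eq_gbFun_cyclic (l : List Bool) :
    gdFun (gcFun l) = gbFun l ∧ gbFun (gdFun l) = gcFun l ∧ gcFun (gbFun l) = gdFun l := by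
  induction l with
  | nil => exact ⟨rfl, rfl, rfl⟩
  | cons s t ih =>
    cases s <;> simp [gbFun, gcFun, gdFun, gaFun_involutive t, ih.1, ih.2.1, ih.2.2]

theorem gd_mul_gc : gd * gc = gb := by
  ext l : 1
  exact (gdFun_gcFun_eq_gbFun_cyclic l).1

theorem gaFun_take (l : List Bool) (k : ℕ) : gaFun (l.take k) = (gaFun l).take k := by
  rcases l with _ | ⟨_, _⟩ <;> rcases k with _ | _ <;> rfl

theorem gbFun_gcFun_gdFun_take (l : List Bool) (k : ℕ) :
    gbFun (l.take k) = (gbFun l).take k ∧ gcFun (l.take k) = (gcFun l).take k ∧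
      gdFun (l.take k) = (gdFun l).take k := by
  induction l generalizing k with
  | nil => simp [gbFun, gcFun, gdFun]
  | cons s t ih =>
    rcases k with _ | k
    · exact ⟨rfl, rfl, rfl⟩
    · cases s <;> simp [gbFun, gcFun, gdFun, gaFun_take, ih k]

theorem grig_le_treeAut : grig ≤ treeAut Bool := by
  refine (Subgroup.closure_le _).mpr ?_
  rintro _ (rfl | rfl | rfl | rfl) l k
  exacts [gaFun_take l k, (gbFun_gcFun_gdFun_take l k).1, (gbFun_gcFun_gdFun_take l k).2.1,
    (gbFun_gcFun_gdFun_take l k).2.2]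

theorem length_apply_of_mem_grig {g : Perm (List Bool)} (hg : g ∈ grig) (l : List Bool) :
    (g l).length = l.length :=
  length_apply_of_mem_treeAut (grig_le_treeAut hg) l

theorem ga_mem_grig : ga ∈ grig := Subgroup.subset_closure (by simp)
theorem gb_mem_grig : gb ∈ grig := Subgroup.subset_closure (by simp)
theorem gc_mem_grig : gc ∈ grig := Subgroup.subset_closure (by simp)
theorem gd_mem_grig : gd ∈ grig := Subgroup.subset_closure (by simp)

theorem exists_treePair_left_mem_grig {g : Perm (List Bool)} (hg : g ∈ grig) :
    ∃ h, treePair (g, h) ∈ grig := by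
  induction hg using Subgroup.closure_induction with
  | mem x hx =>
    rcases hx with rfl | rfl | rfl | rfl
    · exact ⟨gc, gb_eq_treePair ▸ gb_mem_grig⟩
    · refine ⟨1, ?_⟩
      rw [← ga_mul_treePair_mul_ga, ← gd_eq_treePair]
      exact mul_mem (mul_mem ga_mem_grig gd_mem_grig) ga_mem_grig
    · refine ⟨ga, ?_⟩
      rw [← ga_mul_treePair_mul_ga, ← gb_eq_treePair]
      exact mul_mem (mul_mem ga_mem_grig gb_mem_grig) ga_mem_grig
    · refine ⟨ga, ?_⟩
      rw [← ga_mul_treePair_mul_ga, ← gc_eq_treePair]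
      exact mul_mem (mul_mem ga_mem_grig gc_mem_grig) ga_mem_grig
  | one => exact ⟨1, by simp [← Prod.one_eq_mk]⟩
  | mul x y _ _ hx hy =>
    obtain ⟨u, hu⟩ := hx
    obtain ⟨v, hv⟩ := hy
    exact ⟨u * v, by simpa [← Prod.mk_mul_mk] using mul_mem hu hv⟩
  | inv x _ hx =>
    obtain ⟨u, hu⟩ := hx
    exact ⟨u⁻¹, by simpa [← Prod.inv_mk] using inv_mem hu⟩

theorem exists_treePair_right_mem_grig {g : Perm (List Bool)} (hg : g ∈ grig) :
    ∃ h, treePair (h, g) ∈ grig := by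
  obtain ⟨h, hh⟩ := exists_treePair_left_mem_grig hg
  exact ⟨h, ga_mul_treePair_mul_ga g h ▸ mul_mem (mul_mem ga_mem_grig hh) ga_mem_grig⟩

def abSq : Perm (List Bool) := ga * gb * ga * gb

theorem abSq_eq_treePair : abSq = treePair (gc * ga, ga * gc) := by
  rw [abSq, gb_eq_treePair, ga_mul_treePair_mul_ga, ← map_mul, Prod.mk_mul_mk]

theorem abSq_mem_grig : abSq ∈ grig :=
  mul_mem (mul_mem (mul_mem ga_mem_grig gb_mem_grig) ga_mem_grig) gb_mem_grig

def grigK : Subgroup (Perm (List Bool)) :=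
  Subgroup.closure {x | ∃ g ∈ grig, g * abSq * g⁻¹ = x}

theorem abSq_mem_grigK : abSq ∈ grigK :=
  Subgroup.subset_closure ⟨1, one_mem _, by simp⟩

theorem grigK_le_grig : grigK ≤ grig := by
  refine (Subgroup.closure_le _).mpr ?_
  rintro _ ⟨g, hg, rfl⟩
  exact mul_mem (mul_mem hg abSq_mem_grig) (inv_mem hg)

theorem conj_mem_grigK {g k : Perm (List Bool)} (hg : g ∈ grig) (hk : k ∈ grigK) :
    g * k * g⁻¹ ∈ grigK := by
  suffices grigK ≤ grigK.comap (MulAut.conj g).toMonoidHom from this hk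
  refine (Subgroup.closure_le _).mpr ?_
  rintro _ ⟨h, hh, rfl⟩
  exact Subgroup.subset_closure ⟨g * h, mul_mem hg hh, by simp [mul_assoc]⟩

theorem treePair_abSq_one_mem_grigK : treePair (abSq, 1) ∈ grigK := by
  have hj : treePair (gd, ga) ∈ grig := by
    rw [← ga_mul_treePair_mul_ga, ← gc_eq_treePair]
    exact mul_mem (mul_mem ga_mem_grig gc_mem_grig) ga_mem_grig
  -- `(d, a) = aca`, and the identity follows from `dc = b` and `a² = c² = 1`
  have key : treePair (gd, ga) * abSq * (treePair (gd, ga))⁻¹ * abSq = treePair (abSq⁻¹, 1) := by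
    have habSq_inv : abSq⁻¹ = (gd * gc) * ga * (gd * gc) * ga := by
      simp [abSq, gd_mul_gc, mul_assoc, ga_inv, gb_inv]
    rw [habSq_inv, abSq_eq_treePair, ← map_inv, ← map_mul, ← map_mul, ← map_mul]
    congr 1
    ext1
    · simp [gd_inv, mul_assoc]
    · simp [ga_inv, mul_assoc, ga_mul_self_assoc, gc_mul_self]
  have : treePair (abSq, 1) = (treePair (gd, ga) * abSq * (treePair (gd, ga))⁻¹ * abSq)⁻¹ := by
    rw [key, ← map_inv, Prod.inv_mk, inv_inv, inv_one]
  rw [this]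
  exact inv_mem (mul_mem (conj_mem_grigK hj abSq_mem_grigK) abSq_mem_grigK)

theorem treePair_mem_grigK_of_mem {k : Perm (List Bool)} (hk : k ∈ grigK) :
    treePair (k, 1) ∈ grigK ∧ treePair (1, k) ∈ grigK := by
  have hleft : grigK ≤ grigK.comap (treePair.comp (MonoidHom.inl _ _)) := by
    refine (Subgroup.closure_le _).mpr ?_
    rintro _ ⟨g, hg, rfl⟩
    obtain ⟨h, hh⟩ := exists_treePair_left_mem_grig hg
    have := conj_mem_grigK hh treePair_abSq_one_mem_grigK
    simpa [← map_mul, ← map_inv] using this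
  refine ⟨hleft hk, ?_⟩
  rw [← ga_mul_treePair_mul_ga, ← ga_inv]
  exact conj_mem_grigK ga_mem_grig (hleft hk)

theorem exists_abSq_apply_cons_cons (e s : Bool) (u : List Bool) :
    ∃ u', u'.length = u.length ∧ abSq (e :: s :: u) = e :: (!s) :: u' := by
  rw [abSq_eq_treePair]
  cases e <;> cases s <;>
    simp [gc_eq_treePair, length_apply_of_mem_grig ga_mem_grig,
      length_apply_of_mem_grig gd_mem_grig]

theorem exists_mem_grigK_apply_cons (e : Bool) {n : ℕ} {x y : List Bool} (hx : x.length = n)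
    (hy : y.length = n) : ∃ k ∈ grigK, k (e :: x) = e :: y := by
  induction n generalizing e x y with
  | zero =>
    rw [length_eq_zero_iff] at hx hy
    subst hx hy
    exact ⟨1, one_mem _, rfl⟩
  | succ m ih =>
    obtain ⟨s, x, rfl⟩ := exists_cons_of_length_eq_add_one hx
    obtain ⟨s', y, rfl⟩ := exists_cons_of_length_eq_add_one hy
    obtain ⟨f, hf, x', hx', hfx⟩ :
        ∃ f ∈ grigK, ∃ x', x'.length = m ∧ f (e :: s :: x) = e :: s' :: x' := by
      by_cases hs : s' = s
      · exact ⟨1, one_mem _, x, by simpa using hx, by simp [hs]⟩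
      · obtain ⟨u, hu, hau⟩ := exists_abSq_apply_cons_cons e s x
        exact ⟨abSq, abSq_mem_grigK, u, by simpa [hu] using hx, by rw [hau, Bool.eq_not.mpr hs]⟩
    obtain ⟨k, hk, hkx⟩ := ih s' hx' (by simpa using hy)
    cases e
    · exact ⟨treePair (k, 1) * f, mul_mem (treePair_mem_grigK_of_mem hk).1 hf, by simp [hfx, hkx]⟩
    · exact ⟨treePair (1, k) * f, mul_mem (treePair_mem_grigK_of_mem hk).2 hf, by simp [hfx, hkx]⟩

theorem exists_mem_grig_fix_replicate_flip (m : ℕ) (s : Bool) (x : List Bool) :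
    ∃ g ∈ grig, g (replicate (m + 2) true) = replicate (m + 2) true ∧
      g (false :: s :: x) = false :: (!s) :: x := by
  -- `b = (a, c)` flips the letter after `0`; `k ∈ K` is chosen so that `c * k` fixes `1^(m+1)`
  obtain ⟨k, hk, hkx⟩ := exists_mem_grigK_apply_cons true (x := replicate m true)
    (y := gd (replicate m true)) rfl (by rw [length_apply_of_mem_grig gd_mem_grig])
  refine ⟨gb * treePair (1, k),
    mul_mem gb_mem_grig (grigK_le_grig (treePair_mem_grigK_of_mem hk).2), ?_,
    by simp [gb_eq_treePair]⟩
  simp only [replicate_succ, Perm.mul_apply, treePair_apply_true_cons, hkx]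
  simp only [gb_eq_treePair, gc_eq_treePair, treePair_apply_true_cons]
  exact congrArg (true :: true :: ·) (gbcd_involutive _).2.2

theorem exists_mem_grig_fix_replicate_false_cons {n : ℕ} {x y : List Bool} (hx : x.length = n)
    (hy : y.length = n) :
    ∃ g ∈ grig, g (replicate (n + 1) true) = replicate (n + 1) true ∧
      g (false :: x) = false :: y := by
  rcases n with _ | m
  · rw [length_eq_zero_iff] at hx hy
    subst hx hy
    exact ⟨1, one_mem _, rfl, rfl⟩
  obtain ⟨s, x, rfl⟩ := exists_cons_of_length_eq_add_one hx
  obtain ⟨s', y, rfl⟩ := exists_cons_of_length_eq_add_one hy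
  obtain ⟨f, hf, hf_fix, hfx⟩ : ∃ f ∈ grig, f (replicate (m + 2) true) = replicate (m + 2) true ∧
      f (false :: s :: x) = false :: s' :: x := by
    by_cases hs : s' = s
    · exact ⟨1, one_mem _, rfl, by simp [hs]⟩
    · simpa [Bool.eq_not.mpr hs] using exists_mem_grig_fix_replicate_flip m s x
  obtain ⟨k, hk, hkx⟩ := exists_mem_grigK_apply_cons s' (by simpa using hx) (by simpa using hy)
  refine ⟨treePair (k, 1) * f, mul_mem (grigK_le_grig (treePair_mem_grigK_of_mem hk).1) hf, ?_, ?_⟩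
  · rw [Perm.mul_apply, hf_fix, replicate_succ, treePair_apply_true_cons, Perm.one_apply]
  · rw [Perm.mul_apply, hfx, treePair_apply_false_cons, hkx]

theorem exists_mem_grig_fix_replicate_apply_eq {n : ℕ} {u v : List Bool} (hu : u.length = n)
    (hv : v.length = n) (h : leadingOnes u = leadingOnes v) :
    ∃ g ∈ grig, g (replicate n true) = replicate n true ∧ g u = v := by
  induction n generalizing u v with
  | zero =>
    rw [length_eq_zero_iff] at hu hv
    subst hu hv
    exact ⟨1, one_mem _, rfl, rfl⟩
  | succ n ih =>
    obtain ⟨s, u, rfl⟩ := exists_cons_of_length_eq_add_one hu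
    obtain ⟨s', v, rfl⟩ := exists_cons_of_length_eq_add_one hv
    simp only [length_cons, Nat.add_one_inj] at hu hv
    cases s <;> cases s' <;> simp only [leadingOnes_false_cons, leadingOnes_true_cons] at h
    · exact exists_mem_grig_fix_replicate_false_cons hu hv
    · omega
    · omega
    · obtain ⟨g, hg, hg_fix, hgu⟩ := ih hu hv (by omega)
      obtain ⟨g', hg'⟩ := exists_treePair_right_mem_grig hg
      exact ⟨treePair (g', g), hg', by simp [replicate_succ, hg_fix], by simp [hgu]⟩

theorem exists_mem_grig_leadingOnes_apply_replicate {i n : ℕ} (h : i < n) :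
    ∃ g ∈ grig, leadingOnes (g (replicate n true)) = i := by
  obtain ⟨m, rfl⟩ := Nat.exists_eq_add_of_lt h
  induction i with
  | zero => exact ⟨ga, ga_mem_grig, by simp [replicate_succ]⟩
  | succ i ih =>
    obtain ⟨g, hg, hgi⟩ := ih (by omega)
    obtain ⟨g', hg'⟩ := exists_treePair_right_mem_grig hg
    exact ⟨treePair (g', g), hg', by rw [show i + 1 + m + 1 = (i + m + 1) + 1 by omega,
      replicate_succ, treePair_apply_true_cons, leadingOnes_true_cons, hgi]⟩

theorem exists_mem_grigP_smul_eq_iff {n : ℕ} {u v : List Bool} (hu : u.length = n)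
    (hv : v.length = n) : (∃ g ∈ grigP n, g • u = v) ↔ leadingOnes u = leadingOnes v := by
  constructor
  · rintro ⟨g, hg, rfl⟩
    exact (leadingOnes_apply_of_mem_treeAut (grig_le_treeAut g.2) hg hu).symm
  · intro h
    obtain ⟨g, hg, hg_fix, hgu⟩ := exists_mem_grig_fix_replicate_apply_eq hu hv h
    exact ⟨⟨g, hg⟩, hg_fix, hgu⟩

theorem range_leadingOnes_smul_replicate (n : ℕ) :
    Set.range (fun g : grig => leadingOnes (g • replicate n true)) = Set.Iic n := by
  ext i
  constructor
  · rintro ⟨g, rfl⟩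
    change leadingOnes ((g : Perm (List Bool)) (replicate n true)) ≤ n
    simpa [length_apply_of_mem_grig g.2] using
      leadingOnes_le_length ((g : Perm (List Bool)) (replicate n true))
  · intro hi
    rcases (Set.mem_Iic.mp hi).lt_or_eq with hi | rfl
    · obtain ⟨g, hg, hgi⟩ := exists_mem_grig_leadingOnes_apply_replicate hi
      exact ⟨⟨g, hg⟩, hgi⟩
    · exact ⟨1, leadingOnes_replicate i⟩

/-- In the Grigorchuk group, the parabolic subgroup `P_n = Stab_G(1^n)` has exactly
`n+1` orbits on the `n`-th level of the binary tree: two vertices of length `n` lie in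
the same `P_n`-orbit iff they have the same number of leading `1`s, i.e. the orbits are
`{1^n}` and the sets `1^i 0 Σ^(n-1-i)` for `0 ≤ i < n`.  Equivalently, there are
exactly `n+1` double cosets `P_n g P_n` in `G`. -/
theorem grigorchuk_parabolic_orbits (n : ℕ) :
    (∀ u v : List Bool, u.length = n → v.length = n →
        ((∃ g ∈ grigP n, g • u = v) ↔
          (u.takeWhile (fun s => s)).length = (v.takeWhile (fun s => s)).length)) ∧
      Nat.card (DoubleCoset.Quotient ((grigP n : Subgroup grig) : Set grig)
        ((grigP n : Subgroup grig) : Set grig)) = n + 1 := by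
  refine ⟨fun u v hu hv => exists_mem_grigP_smul_eq_iff hu hv, ?_⟩
  have hlen (g : grig) : (g • replicate n true).length = n := by
    change ((g : Perm (List Bool)) (replicate n true)).length = n
    simpa using length_apply_of_mem_grig g.2 (replicate n true)
  rw [grigP, DoubleCoset.card_quotient_stabilizer _ leadingOnes
    fun g₁ g₂ => (exists_mem_grigP_smul_eq_iff (hlen g₁) (hlen g₂)).symm,
    range_leadingOnes_smul_replicate]
  simp
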